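/- Let N ≥ 1 and let (O_μ)_{μ ∈ Fin N²} be a family of Hermitian N×N complex matrices that is orthonormal with respect to the normalized Hilbert–Schmidt inner product, i.e. (1/N)·Tr(O_μ O_ν) = δ_{μν}. Then for every matrix U ∈ M_N(ℂ), the spectral form factor equals the sum of two-point autocorrelation functions over the complete operator basis: ∑_{μ ∈ Fin N²} (1/N)·Tr(U O_μ U† O_μ) = Tr(U) · conj(Tr(U)) = |Tr(U)|², where U† denotes the conjugate transpose of U. -/

import Mathlib

open Matrix BigOperators

section Aux

variable {N : ℕ}

/-- The entry functional as a linear map. -/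
private def entryLM (i j : Fin N) : Matrix (Fin N) (Fin N) ℂ →ₗ[ℂ] ℂ where
  toFun X := X i j
  map_add' X Y := rfl
  map_smul' c X := rfl

/-- The normalized trace-pairing functional `X ↦ (1/N) * Tr (A * X)`. -/
private noncomputable def pairLM (A : Matrix (Fin N) (Fin N) ℂ) :
    Matrix (Fin N) (Fin N) ℂ →ₗ[ℂ] ℂ :=
  (1 / (N : ℂ)) • ((Matrix.traceLinearMap (Fin N) ℂ ℂ).comp (LinearMap.mulLeft ℂ A))

private lemma pairLM_apply (A X : Matrix (Fin N) (Fin N) ℂ) :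
    pairLM A X = (1 / (N : ℂ)) * (A * X).trace := rfl

/-- If a family of linear functionals is "dual" to a basis, it computes coordinates. -/
private lemma repr_eq_of_dual {ι : Type*} [Fintype ι] [DecidableEq ι]
    (b : Module.Basis ι ℂ (Matrix (Fin N) (Fin N) ℂ))
    (φ : ι → (Matrix (Fin N) (Fin N) ℂ →ₗ[ℂ] ℂ))
    (h : ∀ μ ν, φ ν (b μ) = if ν = μ then 1 else 0)
    (X : Matrix (Fin N) (Fin N) ℂ) (ν : ι) :
    b.repr X ν = φ ν X := by
  conv_rhs => rw [← b.sum_repr X]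
  rw [map_sum]
  simp only [_root_.map_smul, h, smul_eq_mul]
  simp [Finset.sum_ite_eq]

end Aux

/-- For an orthonormal (w.r.t. the normalized Hilbert–Schmidt inner
product) family of `N²` Hermitian matrices `O μ`, the sum of two-point autocorrelation
functions over the complete operator basis equals the spectral form factor `|Tr U|²`. -/
theorem sff_eq_sum_2paf (N : ℕ) (hN : 1 ≤ N)
    (O : Fin (N ^ 2) → Matrix (Fin N) (Fin N) ℂ)
    (hHerm : ∀ μ, (O μ).IsHermitian)
    (hortho : ∀ μ ν, (1 / (N : ℂ)) * (O μ * O ν).trace = if μ = ν then 1 else 0)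
    (U : Matrix (Fin N) (Fin N) ℂ) :
    ∑ μ : Fin (N ^ 2), (1 / (N : ℂ)) * (U * O μ * Uᴴ * O μ).trace
      = U.trace * star U.trace := by
  have hdual : ∀ μ ν, pairLM (O ν) (O μ) = if ν = μ then 1 else 0 := by
    intro μ ν
    rw [pairLM_apply, hortho]
  -- linear independence
  have li : LinearIndependent ℂ O := by
    rw [linearIndependent_iff']
    intro s g hsum ν hν
    have := congrArg (pairLM (O ν)) hsum
    rw [map_sum, map_zero] at this
    simp only [_root_.map_smul, hdual, smul_eq_mul] at this
    simp only [mul_ite, mul_one, mul_zero, Finset.sum_ite_eq, hν, if_pos] at this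
    exact this
  have hcard : Fintype.card (Fin (N ^ 2)) =
      Module.finrank ℂ (Matrix (Fin N) (Fin N) ℂ) := by
    simp [Module.finrank_matrix, sq]
  haveI : Nonempty (Fin (N ^ 2)) :=
    ⟨⟨0, by positivity⟩⟩
  set b := basisOfLinearIndependentOfCardEqFinrank li hcard with hb
  have hbcoe : ⇑b = O := coe_basisOfLinearIndependentOfCardEqFinrank li hcard
  -- the superoperator X ↦ U * X * Uᴴ
  set g := LinearMap.mulLeftRight ℂ (U, Uᴴ) with hg
  have hgapp : ∀ X, g X = U * X * Uᴴ := fun X => rfl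
  -- trace via basis b
  have h1 : LinearMap.trace ℂ _ g
      = ∑ μ : Fin (N ^ 2), (1 / (N : ℂ)) * (U * O μ * Uᴴ * O μ).trace := by
    rw [LinearMap.trace_eq_matrix_trace ℂ b g, Matrix.trace]
    apply Finset.sum_congr rfl
    intro μ _
    rw [Matrix.diag_apply, LinearMap.toMatrix_apply,
      repr_eq_of_dual b (fun ν => pairLM (O ν)) (by simpa [hbcoe] using hdual)]
    rw [hgapp, hbcoe, pairLM_apply, Matrix.trace_mul_comm]
  -- trace via the standard basis
  have h2 : LinearMap.trace ℂ _ g = U.trace * star U.trace := by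
    rw [LinearMap.trace_eq_matrix_trace ℂ (Matrix.stdBasis ℂ (Fin N) (Fin N)) g,
      Matrix.trace]
    have hrepr : ∀ (X : Matrix (Fin N) (Fin N) ℂ) (p : Fin N × Fin N),
        (Matrix.stdBasis ℂ (Fin N) (Fin N)).repr X p = X p.1 p.2 := by
      intro X p
      rw [repr_eq_of_dual (Matrix.stdBasis ℂ (Fin N) (Fin N))
        (fun p => entryLM p.1 p.2)]
      · rfl
      · intro q p
        rw [Matrix.stdBasis_eq_single]
        rcases q with ⟨i, j⟩
        rcases p with ⟨k, l⟩
        show Matrix.single i j (1 : ℂ) k l = _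
        by_cases h : (k, l) = (i, j)
        · obtain ⟨rfl, rfl⟩ := Prod.mk.injEq .. ▸ h
          simp [Matrix.single]
        · simp only [if_neg h, Matrix.single, Matrix.of_apply]
          rw [if_neg]
          intro hc
          exact h (Prod.ext hc.1.symm hc.2.symm)
    have : ∀ p : Fin N × Fin N,
        (LinearMap.toMatrix (Matrix.stdBasis ℂ (Fin N) (Fin N))
          (Matrix.stdBasis ℂ (Fin N) (Fin N)) g).diag p = U p.1 p.1 * Uᴴ p.2 p.2 := by
      intro p
      rw [Matrix.diag_apply, LinearMap.toMatrix_apply, hrepr, hgapp,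
        Matrix.stdBasis_eq_single]
      rcases p with ⟨i, j⟩
      show (U * Matrix.single i j (1 : ℂ) * Uᴴ) i j = _
      rw [Matrix.mul_assoc]
      rw [Matrix.mul_apply]
      have : ∀ k, (Matrix.single i j (1 : ℂ) * Uᴴ) k j
          = if k = i then Uᴴ j j else 0 := by
        intro k
        by_cases hk : k = i
        · subst hk; simp
        · rw [if_neg hk]
          simp [Matrix.mul_apply, Matrix.single, Ne.symm hk]
      simp only [this, mul_ite, mul_zero]
      simp
    rw [Finset.sum_congr rfl (fun p _ => this p)]
    rw [← Matrix.trace_conjTranspose, Matrix.trace, Matrix.trace,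
      Fintype.sum_prod_type, Finset.sum_mul_sum]
    simp [Matrix.diag_apply]
  rw [← h1, h2]
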